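/- arXiv:2207.02284 — 3 statements merged into one kernel-verified Lean document; each statement's English description precedes it below -/
import Mathlib

section
/- For every natural number n, ∑_{k=0}^{n} S(n,k) ≤ 2^((2n+1)^2). That is, the sum over all k from 0 to n of the paper's lower bounds S(n,k) on the numbers of lattice-knot diagrams of each stratum never exceeds the total number 2^((2n+1)^2) of lattice knots on the (2n+1)×(2n+1) lattice. -/
/-!
Writing `d = n - k` and `N = (2n+1)^2`, each stratum bound is at most `2^(N-1-k)`:
`c_k ≤ 8^k`, `(d+1)^2 ≤ 4^d`, and the `ε`-term is at most the main term, so it costs at most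
one extra factor `2`, and only when `d ≥ 2`. The exponents then fit below `N - 1 - k`, and the
geometric series `∑ₖ 2^(N-1-k)` stays below `2^N`.
-/

open Finset

/-- `ε(d) = 1` if `d ≥ 2` and `ε(d) = 0` if `d ≤ 1`. -/
def eps (d : ℕ) : ℕ := if 2 ≤ d then 1 else 0

/-- The paper's lower bound `L(n,k)` on the number of copies of an untiable
`(2k+1)×(2k+1)` lattice inside the `(2n+1)×(2n+1)` lattice. -/
def L (n k : ℕ) : ℕ :=
  (n - k + 1) ^ 2 *
    (2 ^ (2 * (n - k) * (n + k + 2)) + eps (n - k) * 2 ^ ((n - k) * (n + 3 * k + 4)))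

/-- The multiplicities `c_0 = 1`, `c_1 = 6`, `c_k = 8k` for `k ≥ 2`. -/
def c (k : ℕ) : ℕ := if k = 0 then 1 else if k = 1 then 6 else 8 * k

/-- The paper's lower bound `S(n,k) = c_k · L(n,k)` on the number of lattice-knot
diagrams on the `(2n+1)×(2n+1)` lattice whose knot type first appears on the
`(2k+1)×(2k+1)` lattice. -/
def S (n k : ℕ) : ℕ := c k * L n k

lemma eight_mul_le_eight_pow {k : ℕ} (hk : 1 ≤ k) : 8 * k ≤ 8 ^ k := by
  induction k, hk using Nat.le_induction with
  | base => norm_num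
  | succ k hk ih => rw [pow_succ]; omega

lemma c_le_two_pow (k : ℕ) : c k ≤ 2 ^ (3 * k) := by
  rw [pow_mul]
  unfold c
  split_ifs with h0 h1
  · simp [h0]
  · simp [h1]
  · exact eight_mul_le_eight_pow (by omega)

lemma succ_sq_le_two_pow (d : ℕ) : (d + 1) ^ 2 ≤ 2 ^ (2 * d) := by
  rw [mul_comm, pow_mul]
  exact Nat.pow_le_pow_left Nat.lt_two_pow_self 2

lemma add_eps_mul_le {a b : ℕ} (d : ℕ) (h : b ≤ a) : a + eps d * b ≤ 2 ^ eps d * a := by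
  unfold eps
  split_ifs <;> omega

lemma L_le_two_pow {n k : ℕ} (hk : k ≤ n) :
    L n k ≤ 2 ^ (2 * (n - k) + (eps (n - k) + 2 * (n - k) * (n + k + 2))) := by
  have h_exp : (n - k) * (n + 3 * k + 4) ≤ 2 * (n - k) * (n + k + 2) :=
    calc (n - k) * (n + 3 * k + 4) ≤ (n - k) * (2 * (n + k + 2)) :=
          Nat.mul_le_mul_left _ (by omega)
      _ = 2 * (n - k) * (n + k + 2) := by ring
  calc L n k ≤ 2 ^ (2 * (n - k)) * (2 ^ eps (n - k) * 2 ^ (2 * (n - k) * (n + k + 2))) :=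
        Nat.mul_le_mul (succ_sq_le_two_pow _)
          (add_eps_mul_le _ (Nat.pow_le_pow_right two_pos h_exp))
    _ = _ := by rw [← pow_add, ← pow_add]

-- For `d ≤ 1` the inequality is tight (at `k = 0, d = 1`), which is why `ε` must vanish there.
lemma stratum_exponent_le (k d : ℕ) :
    3 * k + (2 * d + (eps d + 2 * d * (k + d + k + 2))) + k + 1 ≤ (2 * (k + d) + 1) ^ 2 := by
  unfold eps
  split_ifs with hd
  · nlinarith
  · interval_cases d <;> nlinarith

lemma S_le_two_pow {n k : ℕ} (hk : k ≤ n) : S n k ≤ 2 ^ ((2 * n + 1) ^ 2 - 1 - k) := by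
  obtain ⟨d, rfl⟩ : ∃ d, n = k + d := ⟨n - k, by omega⟩
  calc S (k + d) k ≤ 2 ^ (3 * k) * 2 ^ (2 * d + (eps d + 2 * d * (k + d + k + 2))) := by
        have hL := L_le_two_pow hk
        rw [Nat.add_sub_cancel_left] at hL
        exact Nat.mul_le_mul (c_le_two_pow k) hL
    _ ≤ _ := by
        rw [← pow_add]
        exact Nat.pow_le_pow_right two_pos (by have := stratum_exponent_le k d; omega)

lemma sum_range_pow_sub_lt {m n N : ℕ} (hm : 2 ≤ m) (h : n < N) :
    ∑ k ∈ range (n + 1), m ^ (N - 1 - k) < m ^ N := by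
  have h_inj : Set.InjOn (fun k ↦ N - 1 - k) (range (n + 1)) := by
    intro a ha b hb hab
    simp only [coe_range, Set.mem_Iio] at ha hb
    simp only at hab
    omega
  rw [← sum_image (g := fun k ↦ N - 1 - k) (f := (m ^ ·)) h_inj]
  exact Nat.geomSum_lt hm (by simp only [mem_image, mem_range]; omega)

/-- The sum of the lower bounds `S(n,k)` over all strata `k = 0, …, n` never
exceeds the total number `2^((2n+1)^2)` of lattice knots on the
`(2n+1)×(2n+1)` lattice. -/
theorem sum_lower_bounds_le_total (n : ℕ) :
    ∑ k ∈ Finset.range (n + 1), S n k ≤ 2 ^ ((2 * n + 1) ^ 2) := by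
  calc ∑ k ∈ range (n + 1), S n k ≤ ∑ k ∈ range (n + 1), 2 ^ ((2 * n + 1) ^ 2 - 1 - k) :=
        sum_le_sum fun k hk ↦ S_le_two_pow (Nat.lt_succ_iff.mp (mem_range.mp hk))
    _ ≤ 2 ^ ((2 * n + 1) ^ 2) := (sum_range_pow_sub_lt le_rfl (by nlinarith)).le
end

section
/- For all natural numbers n and k with 1 ≤ k ≤ n, one has S(n,k) < S(n,0). That is, the paper's lower bound on the number of unknot diagrams on the (2n+1)×(2n+1) lattice strictly exceeds the lower bound for every nontrivial stratum. -/
/-!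
Both bounds are dominated by their leading power of two. The `ε` term of `L(n,k)` is at most
the leading term `2^(2(n-k)(n+k+2))`, so `S(n,k) ≤ 2 c_k (n-k+1)² 2^(2(n-k)(n+k+2))`, while
`S(n,0) ≥ (n+1)² 2^(2n(n+2))`. The two exponents differ by `2k² + 4k`, and `2 c_k ≤ 16k` is far
below `2^(2k² + 4k)` once `k ≥ 1`.
-/

theorem eps_le_one (d : ℕ) : eps d ≤ 1 := by
  unfold eps; split_ifs <;> omega

theorem c_le_eight_mul {k : ℕ} (hk : 1 ≤ k) : c k ≤ 8 * k := by
  unfold c; split_ifs <;> omega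

theorem two_mul_c_lt_two_pow {k : ℕ} (hk : 1 ≤ k) : 2 * c k < 2 ^ (2 * k ^ 2 + 4 * k) :=
  calc 2 * c k ≤ 16 * k := by linarith [c_le_eight_mul hk]
    _ < 2 ^ 4 * 2 ^ k := by linarith [k.lt_two_pow_self]
    _ = 2 ^ (k + 4) := by rw [pow_add, mul_comm]
    _ ≤ 2 ^ (2 * k ^ 2 + 4 * k) := Nat.pow_le_pow_right two_pos (by nlinarith)

theorem L_le_two_mul_leading {n k : ℕ} (hkn : k ≤ n) :
    L n k ≤ 2 * ((n - k + 1) ^ 2 * 2 ^ (2 * (n - k) * (n + k + 2))) := by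
  have hexp : (n - k) * (n + 3 * k + 4) ≤ 2 * (n - k) * (n + k + 2) := by
    rw [mul_assoc, mul_left_comm]
    exact Nat.mul_le_mul_left _ (by omega)
  have hε : eps (n - k) * 2 ^ ((n - k) * (n + 3 * k + 4)) ≤ 2 ^ (2 * (n - k) * (n + k + 2)) :=
    calc eps (n - k) * 2 ^ ((n - k) * (n + 3 * k + 4))
        ≤ 1 * 2 ^ (2 * (n - k) * (n + k + 2)) :=
          Nat.mul_le_mul (eps_le_one _) (Nat.pow_le_pow_right two_pos hexp)
      _ = 2 ^ (2 * (n - k) * (n + k + 2)) := one_mul _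
  unfold L
  rw [mul_left_comm, two_mul (2 ^ _)]
  gcongr

theorem leading_le_L_zero (n : ℕ) : (n + 1) ^ 2 * 2 ^ (2 * n * (n + 2)) ≤ L n 0 := by
  simp only [L, Nat.sub_zero, Nat.add_zero, mul_zero]
  gcongr
  exact Nat.le_add_right _ _

theorem S_zero (n : ℕ) : S n 0 = L n 0 := by
  simp [S, c]

theorem leading_exponent_add {n k : ℕ} (hkn : k ≤ n) :
    2 * (n - k) * (n + k + 2) + (2 * k ^ 2 + 4 * k) = 2 * n * (n + 2) := by
  obtain ⟨d, rfl⟩ := Nat.exists_eq_add_of_le hkn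
  rw [Nat.add_sub_cancel_left]
  ring

/-- For `1 ≤ k ≤ n`, the lower bound for the nontrivial stratum `k` is strictly
less than the lower bound for unknot diagrams. -/
theorem unknot_bound_dominates (n k : ℕ) (hk : 1 ≤ k) (hkn : k ≤ n) :
    S n k < S n 0 := by
  set E := 2 * (n - k) * (n + k + 2)
  calc S n k ≤ c k * (2 * ((n - k + 1) ^ 2 * 2 ^ E)) :=
        Nat.mul_le_mul_left _ (L_le_two_mul_leading hkn)
    _ = 2 * c k * ((n - k + 1) ^ 2 * 2 ^ E) := by ring
    _ < 2 ^ (2 * k ^ 2 + 4 * k) * ((n - k + 1) ^ 2 * 2 ^ E) := by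
        gcongr
        exact two_mul_c_lt_two_pow hk
    _ ≤ 2 ^ (2 * k ^ 2 + 4 * k) * ((n + 1) ^ 2 * 2 ^ E) := by gcongr; omega
    _ = (n + 1) ^ 2 * 2 ^ (2 * n * (n + 2)) := by
        rw [← leading_exponent_add hkn, pow_add]; ring
    _ ≤ S n 0 := S_zero n ▸ leading_le_L_zero n
end

section
/- For every natural number n, ∑_{k=1}^{n} S(n,k) ≤ S(n,0). That is, the paper's lower bound on the number of unknot diagrams on the (2n+1)×(2n+1) lattice is at least as large as the sum of the lower bounds over all nontrivial strata combined. -/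
/-!
Write `A = (n+1)² · 2^(2n(n+2))`, the main term of `S(n,0)`. For `1 ≤ k ≤ n` the exponent
splits as `2n(n+2) = 2k(k+2) + 2(n-k)(n+k+2)`, and the factor `2^(2k(k+2))` it frees
outweighs `2 c_k · 2^(k+1)`, so `S(n,k) ≤ A / 2^(k+1)`. Summing a geometric series then
gives `∑_{k ≥ 1} S(n,k) ≤ A ≤ S(n,0)`.
-/

open Finset

lemma sum_le_of_forall_two_pow_succ_mul_le (s : Finset ℕ) {a : ℕ → ℕ} {A : ℕ}
    (h : ∀ k ∈ s, 2 ^ (k + 1) * a k ≤ A) : ∑ k ∈ s, a k ≤ A := by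
  have hterm : ∀ k ∈ s, (a k : ℝ) ≤ A / 2 / 2 ^ k := by
    intro k hk
    rw [div_div, ← pow_succ', le_div_iff₀ (by positivity), mul_comm]
    exact_mod_cast h k hk
  have hgeom : ∑ k ∈ s, (A : ℝ) / 2 / 2 ^ k ≤ A :=
    sum_le_hasSum s (fun _ _ ↦ by positivity) (hasSum_geometric_two' A)
  exact_mod_cast (sum_le_sum hterm).trans hgeom

lemma eps_mul_two_pow_le (n k : ℕ) :
    eps (n - k) * 2 ^ ((n - k) * (n + 3 * k + 4)) ≤ 2 ^ (2 * (n - k) * (n + k + 2)) := by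
  unfold eps
  split_ifs with hd
  · rw [one_mul]
    have hkn : k ≤ n := by omega
    exact Nat.pow_le_pow_right two_pos (by nlinarith)
  · simp

lemma L_le (n k : ℕ) : L n k ≤ 2 * (n + 1) ^ 2 * 2 ^ (2 * (n - k) * (n + k + 2)) := by
  calc L n k ≤ (n + 1) ^ 2 *
        (2 ^ (2 * (n - k) * (n + k + 2)) + 2 ^ (2 * (n - k) * (n + k + 2))) := by
        unfold L
        gcongr
        · omega
        · exact eps_mul_two_pow_le n k
    _ = 2 * (n + 1) ^ 2 * 2 ^ (2 * (n - k) * (n + k + 2)) := by ring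

lemma two_mul_c_mul_two_pow_succ_le {k : ℕ} (hk : 1 ≤ k) :
    2 * c k * 2 ^ (k + 1) ≤ 2 ^ (2 * k * (k + 2)) := by
  obtain rfl | hk2 := hk.eq_or_lt
  · norm_num [c]
  have hc : c k = 8 * k := by simp only [c]; split_ifs <;> omega
  calc 2 * c k * 2 ^ (k + 1) = k * 2 ^ (k + 5) := by rw [hc]; ring
    _ ≤ 2 ^ k * 2 ^ (k + 5) := Nat.mul_le_mul_right _ Nat.lt_two_pow_self.le
    _ = 2 ^ (2 * k + 5) := by rw [← pow_add]; ring_nf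
    _ ≤ 2 ^ (2 * k * (k + 2)) := Nat.pow_le_pow_right two_pos (by nlinarith)

lemma two_pow_mul_two_pow_eq {n k : ℕ} (hkn : k ≤ n) :
    2 ^ (2 * k * (k + 2)) * 2 ^ (2 * (n - k) * (n + k + 2)) = 2 ^ (2 * n * (n + 2)) := by
  obtain ⟨d, rfl⟩ := Nat.exists_eq_add_of_le hkn
  rw [← pow_add, Nat.add_sub_cancel_left]
  ring_nf

lemma two_pow_succ_mul_S_le {n k : ℕ} (hk : 1 ≤ k) (hkn : k ≤ n) :
    2 ^ (k + 1) * S n k ≤ (n + 1) ^ 2 * 2 ^ (2 * n * (n + 2)) := by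
  calc 2 ^ (k + 1) * S n k = 2 ^ (k + 1) * c k * L n k := by rw [S, mul_assoc]
    _ ≤ 2 ^ (k + 1) * c k * (2 * (n + 1) ^ 2 * 2 ^ (2 * (n - k) * (n + k + 2))) := by
        gcongr
        exact L_le n k
    _ = 2 * c k * 2 ^ (k + 1) * ((n + 1) ^ 2 * 2 ^ (2 * (n - k) * (n + k + 2))) := by ring
    _ ≤ 2 ^ (2 * k * (k + 2)) * ((n + 1) ^ 2 * 2 ^ (2 * (n - k) * (n + k + 2))) := by
        gcongr
        exact two_mul_c_mul_two_pow_succ_le hk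
    _ = (n + 1) ^ 2 * 2 ^ (2 * n * (n + 2)) := by
        rw [← two_pow_mul_two_pow_eq hkn]
        ring

lemma le_S_zero (n : ℕ) : (n + 1) ^ 2 * 2 ^ (2 * n * (n + 2)) ≤ S n 0 := by
  simp only [S, L, c, if_pos, Nat.sub_zero, one_mul, add_zero]
  gcongr
  exact Nat.le_add_right _ _

/-- The lower bound on the number of unknot diagrams is at least as large as
the sum of the lower bounds over all nontrivial strata combined. -/
theorem unknot_bound_dominates_sum (n : ℕ) :
    ∑ k ∈ Finset.Icc 1 n, S n k ≤ S n 0 := by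
  calc ∑ k ∈ Finset.Icc 1 n, S n k ≤ (n + 1) ^ 2 * 2 ^ (2 * n * (n + 2)) :=
        sum_le_of_forall_two_pow_succ_mul_le _ fun k hk ↦
          two_pow_succ_mul_S_le (mem_Icc.1 hk).1 (mem_Icc.1 hk).2
    _ ≤ S n 0 := le_S_zero n
end
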